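/- (Coherent beats incoherent for many intervals.) For reals γ > 0 and T > 0, define F(γ, T) = 1 − γ² − √(1 − e^{−2γT}) + γ²/√(1 − e^{−2γT}). Then there exists a natural number K ≥ 1 such that for every natural number k ≥ K, k · F(γ, T) ≥ F(γ, T/k). -/

import Mathlib

/-- The classical Fisher information
`F(γ,T) = 1 − γ² − √(1 − e^{−2γT}) + γ²/√(1 − e^{−2γT})` for estimating the
duration `T` on a clock qubit with dephasing rate `γ`. -/
noncomputable def Floc (γ T : ℝ) : ℝ :=
  1 - γ^2 - Real.sqrt (1 - Real.exp (-2*γ*T))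
    + γ^2 / Real.sqrt (1 - Real.exp (-2*γ*T))

/-!
Writing `s = √(1 - e^{-2γt}) ∈ (0, 1)`, we have `F(γ, t) = (1 - s) + γ² (1/s - 1) > 0`, and
`F(γ, t) ≤ 1 + γ²/s`. The bound `1 - e^{-x} ≥ x/(1 + x)` gives `1/s ≤ √(1 + 1/(2γt))`, so
`F(γ, T/k) = O(√k)` while `k · F(γ, T)` grows linearly in `k`.
-/

open Real

lemma div_one_add_le_one_sub_exp_neg {x : ℝ} (hx : 0 ≤ x) : x / (1 + x) ≤ 1 - exp (-x) := by
  have hexp : exp (-x) ≤ 1 / (1 + x) := by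
    rw [exp_neg, inv_eq_one_div]
    exact one_div_le_one_div_of_le (by linarith) (by linarith [add_one_le_exp x])
  have hsplit : x / (1 + x) = 1 - 1 / (1 + x) := by field_simp; ring
  linarith

lemma Floc_le_one_add_div (γ t : ℝ) :
    Floc γ t ≤ 1 + γ ^ 2 / √(1 - exp (-2 * γ * t)) := by
  unfold Floc
  nlinarith [sq_nonneg γ, sqrt_nonneg (1 - exp (-2 * γ * t))]

lemma Floc_pos {γ t : ℝ} (hγt : 0 < γ * t) : 0 < Floc γ t := by
  set s := √(1 - exp (-2 * γ * t))
  have hexp_pos := exp_pos (-2 * γ * t)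
  have hexp_lt : exp (-2 * γ * t) < 1 := exp_lt_one_iff.mpr (by linarith)
  have hs : 0 < s := sqrt_pos.mpr (by linarith)
  have hs1 : s < 1 := (sqrt_lt' one_pos).mpr (by linarith)
  have hγs : γ ^ 2 ≤ γ ^ 2 / s := by
    rw [le_div_iff₀ hs]; nlinarith [sq_nonneg γ]
  change 0 < 1 - γ ^ 2 - s + γ ^ 2 / s
  linarith

lemma Floc_le_one_add_sqrt {γ t : ℝ} (hγt : 0 < γ * t) :
    Floc γ t ≤ 1 + γ ^ 2 * √(1 + 1 / (2 * γ * t)) := by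
  set x := 2 * γ * t
  have hx : 0 < x := by simp only [x]; linarith
  have hinv : 1 / √(1 - exp (-x)) ≤ √(1 + 1 / x) := by
    have hlow := div_one_add_le_one_sub_exp_neg hx.le
    calc 1 / √(1 - exp (-x)) ≤ 1 / √(x / (1 + x)) :=
          one_div_le_one_div_of_le (sqrt_pos.mpr (by positivity)) (sqrt_le_sqrt hlow)
      _ = √(1 + 1 / x) := by
          rw [one_div, ← sqrt_inv, inv_div, add_div, div_self hx.ne', add_comm]
  calc Floc γ t ≤ 1 + γ ^ 2 / √(1 - exp (-x)) := by
        simpa only [x, neg_mul] using Floc_le_one_add_div γ t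
    _ = 1 + γ ^ 2 * (1 / √(1 - exp (-x))) := by ring
    _ ≤ 1 + γ ^ 2 * √(1 + 1 / x) := by gcongr

lemma Floc_div_le_mul_sqrt {γ T k : ℝ} (hγT : 0 < γ * T) (hk : 1 ≤ k) :
    Floc γ (T / k) ≤ (1 + γ ^ 2 * √(1 + 1 / (2 * γ * T))) * √k := by
  have hk0 : 0 < k := by linarith
  have hsk : 1 ≤ √k := one_le_sqrt.mpr hk
  have harg : 1 + 1 / (2 * γ * (T / k)) ≤ k * (1 + 1 / (2 * γ * T)) := by
    have : 1 / (2 * γ * (T / k)) = k * (1 / (2 * γ * T)) := by field_simp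
    rw [this]
    nlinarith [one_div_pos.mpr (by linarith : 0 < 2 * γ * T)]
  calc Floc γ (T / k) ≤ 1 + γ ^ 2 * √(1 + 1 / (2 * γ * (T / k))) :=
        Floc_le_one_add_sqrt (by rw [mul_div_assoc']; positivity)
    _ ≤ 1 + γ ^ 2 * (√k * √(1 + 1 / (2 * γ * T))) := by
        rw [← sqrt_mul hk0.le]; gcongr
    _ ≤ (1 + γ ^ 2 * √(1 + 1 / (2 * γ * T))) * √k := by
        nlinarith [sq_nonneg γ, sqrt_nonneg (1 + 1 / (2 * γ * T))]

lemma mul_sqrt_le_mul_of_sq_div_le {B c k : ℝ} (hc : 0 < c) (hk : (B / c) ^ 2 ≤ k) :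
    B * √k ≤ k * c := by
  have hBc : B ≤ c * √k := (div_le_iff₀' hc).mp ((le_abs_self _).trans (abs_le_sqrt hk))
  calc B * √k ≤ c * √k * √k := mul_le_mul_of_nonneg_right hBc (sqrt_nonneg k)
    _ = k * c := by rw [mul_assoc, mul_self_sqrt ((sq_nonneg _).trans hk), mul_comm]

/-- Coherent beats incoherent for many intervals: there is a
`K ≥ 1` such that for every `k ≥ K`, `k·F(γ,T) ≥ F(γ,T/k)`. -/
theorem stmt_13 (γ T : ℝ) (hγ : 0 < γ) (hT : 0 < T) :
    ∃ K : ℕ, 1 ≤ K ∧ ∀ k : ℕ, K ≤ k →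
      Floc γ (T / k) ≤ (k : ℝ) * Floc γ T := by
  have hγT : 0 < γ * T := mul_pos hγ hT
  set B := 1 + γ ^ 2 * √(1 + 1 / (2 * γ * T))
  refine ⟨max 1 ⌈(B / Floc γ T) ^ 2⌉₊, le_max_left _ _, fun k hk => ?_⟩
  have hk1 : (1 : ℝ) ≤ k := by exact_mod_cast (le_max_left _ _).trans hk
  have hkB : (B / Floc γ T) ^ 2 ≤ k :=
    (Nat.le_ceil _).trans (by exact_mod_cast (le_max_right _ _).trans hk)
  calc Floc γ (T / k) ≤ B * √k := Floc_div_le_mul_sqrt hγT hk1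
    _ ≤ k * Floc γ T := mul_sqrt_le_mul_of_sq_div_le (Floc_pos hγT) hkB
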